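/- The Haagerup set Λ(H) := {h_{ij} h_{kl} · conj(h_{il}) · conj(h_{kj}) : i,j,k,l ∈ {1,…,n}} is invariant under equivalence of complex Hadamard matrices: if H ~ K then Λ(H) = Λ(K). -/

import Mathlib

open Complex Matrix BigOperators

/-- A complex Hadamard matrix: unimodular entries and `H * Hᴴ = n • 1`. -/
def IsCHadamard {n : ℕ} (H : Matrix (Fin n) (Fin n) ℂ) : Prop :=
  (∀ i j, ‖H i j‖ = 1) ∧ H * H.conjTranspose = (n : ℂ) • 1

/-- A permutation matrix. -/
def IsPermMatrix {n : ℕ} (P : Matrix (Fin n) (Fin n) ℂ) : Prop :=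
  ∃ σ : Equiv.Perm (Fin n), ∀ i j, P i j = if σ j = i then 1 else 0

/-- A diagonal matrix with unimodular diagonal entries. -/
def IsUnitaryDiag {n : ℕ} (D : Matrix (Fin n) (Fin n) ℂ) : Prop :=
  D.IsDiag ∧ ∀ i, ‖D i i‖ = 1

/-- Equivalence of complex Hadamard matrices. -/
def HadEquiv {n : ℕ} (H K : Matrix (Fin n) (Fin n) ℂ) : Prop :=
  ∃ P₁ P₂ D₁ D₂ : Matrix (Fin n) (Fin n) ℂ,
    IsPermMatrix P₁ ∧ IsPermMatrix P₂ ∧ IsUnitaryDiag D₁ ∧ IsUnitaryDiag D₂ ∧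
    P₁ * D₁ * H * D₂ * P₂ = K

/-- The Haagerup set of a matrix. -/
def HaagerupSet {n : ℕ} (H : Matrix (Fin n) (Fin n) ℂ) : Set ℂ :=
  {z | ∃ i j k l : Fin n,
    z = H i j * H k l * starRingEnd ℂ (H i l) * starRingEnd ℂ (H k j)}

/-! Permuting rows and columns only relabels the indices `(i, j, k, l)` of the quadruple products,
and a row phase `u i` or column phase `v j` enters each product once plainly and once conjugated,
so it cancels. -/

open ComplexConjugate

theorem IsPermMatrix.exists_eq_permMatrix {n : ℕ} {P : Matrix (Fin n) (Fin n) ℂ}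
    (hP : IsPermMatrix P) :
    ∃ σ : Equiv.Perm (Fin n), P = σ.permMatrix ℂ := by
  obtain ⟨σ, hσ⟩ := hP
  refine ⟨σ.symm, Matrix.ext fun i j => ?_⟩
  simp [hσ, Equiv.toPEquiv_apply, Equiv.symm_apply_eq, @eq_comm _ i]

theorem HadEquiv.exists_eq_submatrix {n : ℕ} {H K : Matrix (Fin n) (Fin n) ℂ}
    (h : HadEquiv H K) :
    ∃ (σ τ : Equiv.Perm (Fin n)) (u v : Fin n → ℂ), (∀ i, ‖u i‖ = 1) ∧ (∀ j, ‖v j‖ = 1) ∧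
      K = (diagonal u * H * diagonal v).submatrix σ τ := by
  obtain ⟨P₁, P₂, D₁, D₂, hP₁, hP₂, hD₁, hD₂, rfl⟩ := h
  obtain ⟨σ, rfl⟩ := hP₁.exists_eq_permMatrix
  obtain ⟨τ, rfl⟩ := hP₂.exists_eq_permMatrix
  refine ⟨σ, τ.symm, D₁.diag, D₂.diag, hD₁.2, hD₂.2, ?_⟩
  rw [hD₁.1.diagonal_diag, hD₂.1.diagonal_diag, Matrix.mul_assoc, Matrix.mul_assoc,
    Matrix.mul_assoc, PEquiv.toMatrix_toPEquiv_mul, ← Matrix.mul_assoc, ← Matrix.mul_assoc,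
    PEquiv.mul_toMatrix_toPEquiv, submatrix_submatrix]
  rfl

theorem haagerupSet_submatrix {n : ℕ} (H : Matrix (Fin n) (Fin n) ℂ)
    (σ τ : Equiv.Perm (Fin n)) : HaagerupSet (H.submatrix σ τ) = HaagerupSet H := by
  ext z
  constructor
  · rintro ⟨i, j, k, l, rfl⟩
    exact ⟨σ i, τ j, σ k, τ l, rfl⟩
  · rintro ⟨i, j, k, l, rfl⟩
    exact ⟨σ.symm i, τ.symm j, σ.symm k, τ.symm l, by simp⟩

theorem haagerupSet_diagonal_mul_mul_diagonal {n : ℕ} (H : Matrix (Fin n) (Fin n) ℂ)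
    {u v : Fin n → ℂ} (hu : ∀ i, ‖u i‖ = 1) (hv : ∀ j, ‖v j‖ = 1) :
    HaagerupSet (diagonal u * H * diagonal v) = HaagerupSet H := by
  have phases_cancel (i j k l : Fin n) :
      (u i * H i j * v j) * (u k * H k l * v l) * conj (u i * H i l * v l) *
        conj (u k * H k j * v j) =
      H i j * H k l * conj (H i l) * conj (H k j) :=
    calc _ = (u i * conj (u i)) * (u k * conj (u k)) * (v j * conj (v j)) * (v l * conj (v l)) *
          (H i j * H k l * conj (H i l) * conj (H k j)) := by
          simp only [map_mul]; ring
      _ = _ := by simp only [Complex.mul_conj', hu, hv]; norm_num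
  simp only [HaagerupSet, mul_diagonal, diagonal_mul, phases_cancel]

theorem haagerup_invariant_general {n : ℕ} (H K : Matrix (Fin n) (Fin n) ℂ)
    (h : HadEquiv H K) :
    HaagerupSet H = HaagerupSet K := by
  obtain ⟨σ, τ, u, v, hu, hv, rfl⟩ := h.exists_eq_submatrix
  rw [haagerupSet_submatrix, haagerupSet_diagonal_mul_mul_diagonal H hu hv]

theorem haagerup_invariant {n : ℕ} (H K : Matrix (Fin n) (Fin n) ℂ)
    (hH : IsCHadamard H) (hK : IsCHadamard K) (h : HadEquiv H K) :
    HaagerupSet H = HaagerupSet K :=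
  haagerup_invariant_general H K h
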